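/- Let Q ∈ 𝕊₊ⁿ and S ∈ 𝕊₊ⁿ, and let {xᵗ}, {yᵗ} be generated by the Nesterov iteration without restart: x⁰ = y¹, α₁ = 1, α_{t+1} = (1+√(1+4α_t²))/2, Qxᵗ − b + S(xᵗ − yᵗ) = 0, y^{t+1} = xᵗ + ((α_t−1)/α_{t+1})(xᵗ − x^{t−1}). Then for all t ≥ 1, f(xᵗ) ≤ f(x⁰). -/

import Mathlib

/-!
Write `‖v‖²_S = v ⬝ᵥ S *ᵥ v`. The optimality condition says that `x_t` minimises the convex
quadratic `z ↦ f z + ½‖z - y_t‖²_S`, whose Hessian is `Q + S`; hence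
`f x_t + ½‖x_t - z‖²_S ≤ f z + ½‖y_t - z‖²_S` for every `z`. Taking `z = x_{t-1}` and
`y_t - x_{t-1} = c (x_{t-1} - x_{t-2})` with `c² ≤ 1` shows that the energy
`f x_t + ½‖x_t - x_{t-1}‖²_S` does not increase, and at `t = 1` it is at most `f x_0`
because `y_1 = x_0`.
-/

open Matrix

namespace Matrix

variable {ι R : Type*} [Fintype ι] [CommRing R]

theorem IsSymm.dotProduct_mulVec_comm {A : Matrix ι ι R} (hA : A.IsSymm) (u v : ι → R) :
    u ⬝ᵥ A *ᵥ v = v ⬝ᵥ A *ᵥ u := by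
  simpa only [hA.eq] using dotProduct_transpose_mulVec A u v

theorem IsSymm.add_dotProduct_mulVec_add {A : Matrix ι ι R} (hA : A.IsSymm) (u v : ι → R) :
    (u + v) ⬝ᵥ A *ᵥ (u + v) = u ⬝ᵥ A *ᵥ u + 2 * (v ⬝ᵥ A *ᵥ u) + v ⬝ᵥ A *ᵥ v := by
  rw [mulVec_add, dotProduct_add, add_dotProduct, add_dotProduct, hA.dotProduct_mulVec_comm u v]
  ring

theorem smul_dotProduct_mulVec_smul (A : Matrix ι ι R) (c : R) (v : ι → R) :
    (c • v) ⬝ᵥ A *ᵥ (c • v) = c ^ 2 * (v ⬝ᵥ A *ᵥ v) := by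
  rw [mulVec_smul, dotProduct_smul, smul_dotProduct, smul_eq_mul, smul_eq_mul]
  ring

theorem neg_dotProduct_mulVec_neg (A : Matrix ι ι R) (v : ι → R) :
    (-v) ⬝ᵥ A *ᵥ (-v) = v ⬝ᵥ A *ᵥ v := by
  rw [mulVec_neg, neg_dotProduct, dotProduct_neg, neg_neg]

theorem PosSemidef.dotProduct_mulVec_self_nonneg [PartialOrder R] [StarRing R] [TrivialStar R]
    {A : Matrix ι ι R} (hA : A.PosSemidef) (v : ι → R) : 0 ≤ v ⬝ᵥ A *ᵥ v := by
  simpa only [star_trivial] using hA.dotProduct_mulVec_nonneg v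

end Matrix

variable {ι : Type*} [Fintype ι]

noncomputable def quadraticObjective (Q : Matrix ι ι ℝ) (b x : ι → ℝ) : ℝ :=
  (1 / 2) * (x ⬝ᵥ Q *ᵥ x) - b ⬝ᵥ x

theorem quadraticObjective_add_prox_eq {Q S : Matrix ι ι ℝ} (hQ : Q.IsSymm) (hS : S.IsSymm)
    {b x y : ι → ℝ} (hx : Q *ᵥ x - b + S *ᵥ (x - y) = 0) (z : ι → ℝ) :
    quadraticObjective Q b z + (1 / 2) * ((z - y) ⬝ᵥ S *ᵥ (z - y)) =
      quadraticObjective Q b x + (1 / 2) * ((x - y) ⬝ᵥ S *ᵥ (x - y))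
        + (1 / 2) * ((z - x) ⬝ᵥ Q *ᵥ (z - x)) + (1 / 2) * ((z - x) ⬝ᵥ S *ᵥ (z - x)) := by
  have hgrad : (z - x) ⬝ᵥ (Q *ᵥ x - b + S *ᵥ (x - y)) = 0 := by rw [hx, dotProduct_zero]
  have hQz := hQ.add_dotProduct_mulVec_add x (z - x)
  have hSz := hS.add_dotProduct_mulVec_add (x - y) (z - x)
  rw [add_sub_cancel] at hQz
  rw [sub_add_sub_cancel', add_comm] at hSz
  have hb : b ⬝ᵥ z = b ⬝ᵥ x + (z - x) ⬝ᵥ b := by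
    rw [dotProduct_comm b z, dotProduct_comm b x, sub_dotProduct]; ring
  rw [dotProduct_add, dotProduct_sub] at hgrad
  rw [quadraticObjective, quadraticObjective, hQz, hSz, hb]
  linarith

theorem quadraticObjective_add_prox_le {Q S : Matrix ι ι ℝ} (hQ : Q.PosSemidef)
    (hS : S.PosSemidef) {b x y : ι → ℝ} (hx : Q *ᵥ x - b + S *ᵥ (x - y) = 0) (z : ι → ℝ) :
    quadraticObjective Q b x + (1 / 2) * ((x - z) ⬝ᵥ S *ᵥ (x - z)) ≤
      quadraticObjective Q b z + (1 / 2) * ((y - z) ⬝ᵥ S *ᵥ (y - z)) := by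
  have hQsymm : Q.IsSymm := isHermitian_iff_isSymm.mp hQ.isHermitian
  have hSsymm : S.IsSymm := isHermitian_iff_isSymm.mp hS.isHermitian
  have h := quadraticObjective_add_prox_eq hQsymm hSsymm hx z
  rw [← neg_sub z x, ← neg_sub z y, neg_dotProduct_mulVec_neg, neg_dotProduct_mulVec_neg]
  linarith [hQ.dotProduct_mulVec_self_nonneg (z - x), hS.dotProduct_mulVec_self_nonneg (x - y)]

theorem quadraticObjective_momentum_step_le {Q S : Matrix ι ι ℝ} (hQ : Q.PosSemidef)
    (hS : S.PosSemidef) {b x₀ x x' y' : ι → ℝ} {c : ℝ} (hc : c ^ 2 ≤ 1)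
    (hy' : y' = x + c • (x - x₀)) (hx' : Q *ᵥ x' - b + S *ᵥ (x' - y') = 0) :
    quadraticObjective Q b x' + (1 / 2) * ((x' - x) ⬝ᵥ S *ᵥ (x' - x)) ≤
      quadraticObjective Q b x + (1 / 2) * ((x - x₀) ⬝ᵥ S *ᵥ (x - x₀)) := by
  have hprox := quadraticObjective_add_prox_le hQ hS hx' x
  rw [hy', add_sub_cancel_left, smul_dotProduct_mulVec_smul] at hprox
  linarith [mul_le_of_le_one_left (hS.dotProduct_mulVec_self_nonneg (x - x₀)) hc]

noncomputable def nesterovNext (a : ℝ) : ℝ := (1 + √(1 + 4 * a ^ 2)) / 2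

theorem one_le_nesterovNext (a : ℝ) : 1 ≤ nesterovNext a := by
  have : 1 ≤ √(1 + 4 * a ^ 2) := Real.one_le_sqrt.mpr (by nlinarith)
  unfold nesterovNext; linarith

theorem lt_nesterovNext (a : ℝ) : a < nesterovNext a := by
  have : 2 * a < √(1 + 4 * a ^ 2) := Real.lt_sqrt_of_sq_lt (by nlinarith)
  unfold nesterovNext; linarith

theorem sq_sub_one_div_nesterovNext_le_one {a : ℝ} (ha : 0 ≤ a) :
    ((a - 1) / nesterovNext a) ^ 2 ≤ 1 := by
  have hpos : 0 < nesterovNext a := zero_lt_one.trans_le (one_le_nesterovNext a)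
  rw [sq_le_one_iff_abs_le_one, abs_div, abs_of_pos hpos, div_le_one hpos, abs_le]
  constructor <;> linarith [one_le_nesterovNext a, lt_nesterovNext a]

theorem nesterov_no_restart_descent {n : ℕ}
    (Q S : Matrix (Fin n) (Fin n) ℝ) (b : Fin n → ℝ)
    (hQ : Q.PosSemidef) (hS : S.PosSemidef)
    (f : (Fin n → ℝ) → ℝ)
    (hf : ∀ x, f x = (1 / 2) * (x ⬝ᵥ Q *ᵥ x) - b ⬝ᵥ x)
    (x y : ℕ → (Fin n → ℝ)) (α : ℕ → ℝ)
    (hα1 : α 1 = 1)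
    (hαrec : ∀ t, 1 ≤ t → α (t + 1) = (1 + Real.sqrt (1 + 4 * (α t) ^ 2)) / 2)
    (hx0 : x 0 = y 1)
    (hopt : ∀ t, 1 ≤ t → Q *ᵥ x t - b + S *ᵥ (x t - y t) = 0)
    (hy : ∀ t, 1 ≤ t →
      y (t + 1) = x t + ((α t - 1) / α (t + 1)) • (x t - x (t - 1))) :
    ∀ t, 1 ≤ t → f (x t) ≤ f (x 0) := by
  obtain rfl : f = quadraticObjective Q b := funext hf
  have hnext (t : ℕ) : α (t + 2) = nesterovNext (α (t + 1)) := hαrec (t + 1) (by omega)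
  have hα (t : ℕ) : 0 ≤ α (t + 1) := by
    cases t with
    | zero => simp [hα1]
    | succ t => exact hnext t ▸ zero_le_one.trans (one_le_nesterovNext _)
  set E : ℕ → ℝ := fun t ↦ quadraticObjective Q b (x (t + 1)) +
    (1 / 2) * ((x (t + 1) - x t) ⬝ᵥ S *ᵥ (x (t + 1) - x t))
  have hE0 : E 0 ≤ quadraticObjective Q b (x 0) := by
    have h := quadraticObjective_add_prox_le hQ hS (hopt 1 le_rfl) (x 0)
    rwa [← hx0, sub_self, zero_dotProduct, mul_zero, add_zero] at h
  have hEanti : Antitone E := antitone_nat_of_succ_le fun t ↦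
    quadraticObjective_momentum_step_le hQ hS
      (hnext t ▸ sq_sub_one_div_nesterovNext_le_one (hα t)) (hy (t + 1) (by omega))
      (hopt (t + 2) (by omega))
  rintro (_ | t) ht
  · omega
  · calc quadraticObjective Q b (x (t + 1))
        ≤ E t := le_add_of_nonneg_right <|
          mul_nonneg one_half_pos.le (hS.dotProduct_mulVec_self_nonneg _)
      _ ≤ E 0 := hEanti (Nat.zero_le t)
      _ ≤ quadraticObjective Q b (x 0) := hE0
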